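/- Let $a, m$ be positive integers with $a \mid m$ and let $s \in \mathbb{C}$ with $\Re(s) > 1$. Then $\sigma_{1-s}(m/a) = \zeta(s)\frac{1}{a}\sum_{\ell\geq1}\frac{c_\ell(m)}{\ell^s}(\ell,a)^s$. -/

import Mathlib

/-!
Group the Dirichlet series `∑ c_ℓ(m) (ℓ, a)^s ℓ^{-s}` by `n = ℓ / (ℓ, a)`: it becomes the
Dirichlet series of `b(n) = ∑_{ℓ / (ℓ, a) = n} c_ℓ(m)`. Since `ℓ ∣ N a ↔ ℓ / (ℓ, a) ∣ N`, the
convolution `1 ⍟ b` is `N ↦ ∑_{ℓ ∣ N a} c_ℓ(m)`, which by the orthogonality relation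
`∑_{d ∣ N} c_d(m) = N · [N ∣ m]` equals `a N · [N ∣ m / a]`; the Dirichlet series of that is
`a σ_{1-s}(m / a)`. Everything converges absolutely because `|c_ℓ(m)| ≤ σ(m)`.
-/

open Finset

/-- The Ramanujan sum `c_ℓ(m) = ∑_{h mod ℓ, (h,ℓ)=1} e^{2πi h m / ℓ}`. -/
noncomputable def ramanujanSum (ℓ : ℕ) (m : ℤ) : ℂ :=
  ∑ h ∈ (Finset.range ℓ).filter (fun h => Nat.Coprime h ℓ),
    Complex.exp (2 * Real.pi * Complex.I * h * m / ℓ)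

/-- The divisor power sum `σ_α(n) = ∑_{d ∣ n} d^α` with complex exponent. -/
noncomputable def sigmaC (α : ℂ) (n : ℕ) : ℂ := ∑ d ∈ n.divisors, (d : ℂ) ^ α

open LSeries LSeries.notation

theorem sum_range_exp_eq_ite {N : ℕ} (hN : N ≠ 0) (m : ℤ) :
    ∑ j ∈ range N, Complex.exp (2 * Real.pi * Complex.I * j * m / N) =
      if (N : ℤ) ∣ m then (N : ℂ) else 0 := by
  have hζ := Complex.isPrimitiveRoot_exp N hN
  have hterm (j : ℕ) : Complex.exp (2 * Real.pi * Complex.I * j * m / N) =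
      (Complex.exp (2 * Real.pi * Complex.I / N) ^ m) ^ j := by
    rw [← Complex.exp_int_mul, ← Complex.exp_nat_mul]
    ring_nf
  simp_rw [hterm]
  split_ifs with h
  · simp [(hζ.zpow_eq_one_iff_dvd m).2 h]
  · have hω : (Complex.exp (2 * Real.pi * Complex.I / N) ^ m) ^ N = 1 := by
      rw [← zpow_natCast, ← zpow_mul, mul_comm m, zpow_mul, zpow_natCast, hζ.pow_eq_one, one_zpow]
    rw [geom_sum_eq ((hζ.zpow_eq_one_iff_dvd m).not.2 h), hω, sub_self, zero_div]

theorem sum_divisors_ramanujanSum {N : ℕ} (hN : N ≠ 0) (m : ℤ) :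
    ∑ d ∈ N.divisors, ramanujanSum d m = if (N : ℤ) ∣ m then (N : ℂ) else 0 := by
  rw [← sum_range_exp_eq_ite hN m]
  simp only [ramanujanSum]
  rw [sum_sigma']
  -- `j / N` in lowest terms is `(j / (j, N)) / (N / (j, N))`
  refine sum_nbij' (fun p => p.2 * (N / p.1)) (fun j => ⟨N / j.gcd N, j / j.gcd N⟩)
    ?_ ?_ ?_ ?_ ?_
  · rintro ⟨d, h⟩ hdh
    simp only [mem_sigma, Nat.mem_divisors, mem_filter, mem_range] at hdh ⊢
    obtain ⟨⟨⟨r, rfl⟩, -⟩, hhd, -⟩ := hdh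
    have hr : 0 < r := Nat.pos_of_mul_pos_left (Nat.pos_of_ne_zero hN)
    rw [Nat.mul_div_cancel_left r (by omega)]
    exact Nat.mul_lt_mul_of_pos_right hhd hr
  · intro j hj
    simp only [mem_sigma, Nat.mem_divisors, mem_filter, mem_range] at hj ⊢
    exact ⟨⟨Nat.div_dvd_of_dvd (Nat.gcd_dvd_right j N), hN⟩,
      Nat.div_lt_div_of_lt_of_dvd (Nat.gcd_dvd_right j N) hj,
      Nat.coprime_div_gcd_div_gcd (Nat.gcd_pos_of_pos_right j (by omega))⟩
  · rintro ⟨d, h⟩ hdh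
    simp only [mem_sigma, Nat.mem_divisors, mem_filter, mem_range] at hdh ⊢
    obtain ⟨⟨⟨r, rfl⟩, -⟩, -, hcop⟩ := hdh
    have hr : 0 < r := Nat.pos_of_mul_pos_left (Nat.pos_of_ne_zero hN)
    have hd : 0 < d := Nat.pos_of_mul_pos_right (Nat.pos_of_ne_zero hN)
    have hgcd : (h * r).gcd (d * r) = r := by rw [Nat.gcd_mul_right, hcop, one_mul]
    simp [Nat.mul_div_cancel_left r hd, hgcd, Nat.mul_div_cancel _ hr]
  · intro j hj
    dsimp only
    rw [Nat.div_div_self (Nat.gcd_dvd_right j N) hN, Nat.div_mul_cancel (Nat.gcd_dvd_left j N)]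
  · rintro ⟨d, h⟩ hdh
    simp only [mem_sigma, Nat.mem_divisors, mem_filter, mem_range] at hdh
    obtain ⟨⟨⟨r, rfl⟩, -⟩, -, -⟩ := hdh
    have hr : 0 < r := Nat.pos_of_mul_pos_left (Nat.pos_of_ne_zero hN)
    have hd : 0 < d := Nat.pos_of_mul_pos_right (Nat.pos_of_ne_zero hN)
    simp only [Nat.mul_div_cancel_left r hd]
    congr 1
    have : (r : ℂ) ≠ 0 := Nat.cast_ne_zero.2 hr.ne'
    push_cast
    field_simp

theorem norm_ramanujanSum_le {m : ℤ} (hm : m ≠ 0) (N : ℕ) :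
    ‖ramanujanSum N m‖ ≤ ∑ d ∈ m.natAbs.divisors, (d : ℝ) := by
  rcases eq_or_ne N 0 with rfl | hN
  · simp only [ramanujanSum, range_zero, filter_empty, sum_empty, norm_zero]
    positivity
  have hinv := (ArithmeticFunction.sum_eq_iff_sum_smul_moebius_eq
      (f := fun n => ramanujanSum n m) (g := fun n => if (n : ℤ) ∣ m then (n : ℂ) else 0)).mp
      (fun n hn => sum_divisors_ramanujanSum hn.ne' m) N (Nat.pos_of_ne_zero hN)
  rw [← hinv]
  calc _ ≤ ∑ x ∈ N.divisorsAntidiagonal, ‖if (x.2 : ℤ) ∣ m then (x.2 : ℂ) else 0‖ := by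
        refine (norm_sum_le _ _).trans (sum_le_sum fun x _ => ?_)
        rw [norm_smul]
        refine mul_le_of_le_one_left (norm_nonneg _) ?_
        rw [Int.norm_eq_abs]
        exact_mod_cast ArithmeticFunction.abs_moebius_le_one
    _ = ∑ d ∈ N.divisors with d ∣ m.natAbs, (d : ℝ) := by
        rw [Nat.sum_divisorsAntidiagonal' (fun _ d => ‖if (d : ℤ) ∣ m then (d : ℂ) else 0‖),
          sum_filter]
        refine sum_congr rfl fun d _ => ?_
        simp only [Int.natCast_dvd]
        split_ifs <;> simp
    _ ≤ _ := by
        refine sum_le_sum_of_subset_of_nonneg (fun d hd => ?_) fun _ _ _ => by positivity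
        simp only [mem_filter, Nat.mem_divisors] at hd ⊢
        exact ⟨hd.2, by omega⟩

theorem Nat.dvd_mul_iff_div_gcd_dvd {ℓ : ℕ} (hℓ : ℓ ≠ 0) (a N : ℕ) :
    ℓ ∣ N * a ↔ ℓ / ℓ.gcd a ∣ N := by
  obtain ⟨q, b, hcop, hq, hb⟩ := Nat.exists_coprime ℓ a
  have hg : 0 < ℓ.gcd a := Nat.gcd_pos_of_pos_left a (Nat.pos_of_ne_zero hℓ)
  set g := ℓ.gcd a
  rw [hq, hb, ← mul_assoc, Nat.mul_dvd_mul_iff_right hg, Nat.mul_div_cancel _ hg]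
  exact hcop.dvd_mul_right

/-- The fiber of `ℓ ↦ ℓ / (ℓ, a)` over `n ≠ 0`: all its elements divide `n * a`. -/
def divGcdFiber (a n : ℕ) : Finset ℕ := {ℓ ∈ (n * a).divisors | ℓ / ℓ.gcd a = n}

theorem mem_divGcdFiber {a ℓ : ℕ} (ha : a ≠ 0) (hℓ : ℓ ≠ 0) (n : ℕ) :
    ℓ ∈ divGcdFiber a n ↔ ℓ / ℓ.gcd a = n := by
  refine ⟨fun h => (mem_filter.1 h).2, fun h => mem_filter.2 ⟨Nat.mem_divisors.2 ⟨?_, ?_⟩, h⟩⟩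
  · exact (Nat.dvd_mul_iff_div_gcd_dvd hℓ a n).2 h.dvd
  · exact mul_ne_zero (h ▸ (Nat.div_gcd_pos_of_pos_left a (Nat.pos_of_ne_zero hℓ)).ne') ha

theorem sum_divisors_sum_divGcdFiber {M : Type*} [AddCommMonoid M] {a N : ℕ} (ha : a ≠ 0)
    (hN : N ≠ 0) (c : ℕ → M) :
    ∑ d ∈ N.divisors, ∑ ℓ ∈ divGcdFiber a d, c ℓ = ∑ ℓ ∈ (N * a).divisors, c ℓ := by
  have hmaps : ∀ ℓ ∈ (N * a).divisors, ℓ / ℓ.gcd a ∈ N.divisors := fun ℓ hℓ =>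
    Nat.mem_divisors.2 ⟨(Nat.dvd_mul_iff_div_gcd_dvd (Nat.ne_of_gt (Nat.pos_of_mem_divisors hℓ))
      a N).1 (Nat.dvd_of_mem_divisors hℓ), hN⟩
  rw [← sum_fiberwise_of_maps_to hmaps]
  refine sum_congr rfl fun d hd => sum_congr (ext fun ℓ => ?_) fun _ _ => rfl
  rcases eq_or_ne ℓ 0 with rfl | hℓ
  · simp only [divGcdFiber, mem_filter, Nat.mem_divisors, zero_dvd_iff, ne_eq, and_not_self,
      false_and]
  rw [mem_divGcdFiber ha hℓ, mem_filter, Nat.mem_divisors, Nat.dvd_mul_iff_div_gcd_dvd hℓ]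
  exact ⟨fun h => ⟨⟨h ▸ Nat.dvd_of_mem_divisors hd, mul_ne_zero hN ha⟩, h⟩, fun h => h.2⟩

theorem LSeriesHasSum_sum_divGcdFiber {a : ℕ} (ha : a ≠ 0) {c : ℕ → ℂ} {s : ℂ}
    (hc : LSeriesSummable (fun ℓ => c ℓ * (ℓ.gcd a : ℂ) ^ s) s) :
    LSeriesHasSum (fun n => ∑ ℓ ∈ divGcdFiber a n, c ℓ) s
      (LSeries (fun ℓ => c ℓ * (ℓ.gcd a : ℂ) ^ s) s) := by
  set χ : ℕ → ℂ := fun ℓ => c ℓ * (ℓ.gcd a : ℂ) ^ s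
  have hfiber (n : ℕ) : ∑' ℓ : (fun ℓ => ℓ / ℓ.gcd a) ⁻¹' {n}, term χ s ℓ =
      term (fun n => ∑ ℓ ∈ divGcdFiber a n, c ℓ) s n := by
    rw [_root_.tsum_subtype, tsum_eq_sum (s := divGcdFiber a n)]
    · rcases eq_or_ne n 0 with rfl | hn
      · simp [divGcdFiber]
      rw [term_of_ne_zero hn, sum_div]
      refine sum_congr rfl fun ℓ hℓ => ?_
      have hℓ0 : ℓ ≠ 0 := Nat.ne_of_gt (Nat.pos_of_mem_divisors (mem_filter.1 hℓ).1)
      have hq : ℓ / ℓ.gcd a = n := (mem_filter.1 hℓ).2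
      rw [Set.indicator_of_mem (by exact hq), term_of_ne_zero hℓ0]
      have hg : ((ℓ.gcd a : ℕ) : ℂ) ^ s ≠ 0 := by
        simp [Complex.cpow_eq_zero_iff, Nat.gcd_eq_zero_iff, hℓ0]
      have hℓs : (ℓ : ℂ) ^ s = ((ℓ.gcd a : ℕ) : ℂ) ^ s * (n : ℂ) ^ s := by
        rw [← Complex.natCast_mul_natCast_cpow, ← Nat.cast_mul, ← hq,
          Nat.mul_div_cancel' (Nat.gcd_dvd_left ℓ a)]
      rw [hℓs, mul_comm (_ ^ s)]
      exact mul_div_mul_right _ _ hg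
    · intro ℓ hℓ
      rcases eq_or_ne ℓ 0 with rfl | hℓ0
      · simp
      refine Set.indicator_of_notMem (fun h => hℓ ?_) _
      exact (mem_divGcdFiber ha hℓ0 n).2 h
  simpa only [LSeriesHasSum, hfiber] using hc.LSeriesHasSum.tsum_fiberwise (fun ℓ => ℓ / ℓ.gcd a)

theorem one_convolution_sum_divGcdFiber_ramanujanSum {a m N : ℕ} (ha : a ≠ 0) (hdvd : a ∣ m)
    (hN : N ≠ 0) :
    (1 ⍟ fun n => ∑ ℓ ∈ divGcdFiber a n, ramanujanSum ℓ m) N =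
      (a : ℂ) * if N ∣ m / a then (N : ℂ) else 0 := by
  rw [convolution_def]
  simp only [Pi.one_apply, one_mul]
  rw [Nat.sum_divisorsAntidiagonal' (fun _ d => ∑ ℓ ∈ divGcdFiber a d, ramanujanSum ℓ m),
    sum_divisors_sum_divGcdFiber ha hN, sum_divisors_ramanujanSum (mul_ne_zero hN ha)]
  have hiff : ((N * a : ℕ) : ℤ) ∣ m ↔ N ∣ m / a := by
    rw [Int.natCast_dvd_natCast, Nat.dvd_div_iff_mul_dvd hdvd, mul_comm]
  simp only [hiff]
  split_ifs <;> push_cast <;> ring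

theorem LSeriesHasSum_sigmaC {k : ℕ} (hk : k ≠ 0) (s : ℂ) :
    LSeriesHasSum (fun n => if n ∣ k then (n : ℂ) else 0) s (sigmaC (1 - s) k) := by
  have hσ : sigmaC (1 - s) k =
      ∑ d ∈ k.divisors, term (fun n => if n ∣ k then (n : ℂ) else 0) s d := by
    refine sum_congr rfl fun d hd => ?_
    have hd0 : d ≠ 0 := Nat.ne_of_gt (Nat.pos_of_mem_divisors hd)
    rw [term_of_ne_zero hd0, if_pos (Nat.dvd_of_mem_divisors hd),
      Complex.cpow_sub _ _ (Nat.cast_ne_zero.2 hd0), Complex.cpow_one]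
  rw [hσ]
  refine hasSum_sum_of_ne_finset_zero fun n hn => ?_
  rcases eq_or_ne n 0 with rfl | hn0
  · exact term_zero _ _
  rw [term_of_ne_zero hn0, if_neg fun h => hn (Nat.mem_divisors.2 ⟨h, hk⟩), zero_div]

theorem modified_ramanujan_identity (a m : ℕ) (ha : 0 < a) (hm : 0 < m)
    (hdvd : a ∣ m) (s : ℂ) (hs : 1 < s.re) :
    sigmaC (1 - s) (m / a) =
      riemannZeta s * ((1 / (a : ℂ)) * ∑' ℓ : ℕ,
        ramanujanSum (ℓ + 1) (m : ℤ) * ((Nat.gcd (ℓ + 1) a : ℂ) ^ s) / ((ℓ : ℂ) + 1) ^ s) := by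
  set χ : ℕ → ℂ := fun ℓ => ramanujanSum ℓ m * (ℓ.gcd a : ℂ) ^ s
  have hχ : LSeriesSummable χ s := by
    refine LSeriesSummable_of_bounded_of_one_lt_re
      (m := (∑ d ∈ m.divisors, (d : ℝ)) * a ^ s.re) (fun ℓ _ => ?_) hs
    rw [norm_mul, Complex.norm_natCast_cpow_of_pos (Nat.gcd_pos_of_pos_right ℓ ha)]
    gcongr
    · simpa using norm_ramanujanSum_le (Int.natCast_ne_zero.2 hm.ne') ℓ
    · exact Nat.le_of_dvd ha (Nat.gcd_dvd_right ℓ a)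
  have hT : HasSum (fun ℓ : ℕ => ramanujanSum (ℓ + 1) m * ((Nat.gcd (ℓ + 1) a : ℂ) ^ s) /
      ((ℓ : ℂ) + 1) ^ s) (LSeries χ s) := by
    simpa [term_of_ne_zero, χ] using (hasSum_nat_add_iff' 1).2 hχ.LSeriesHasSum
  have hζ := (LSeriesHasSum_one hs).convolution (LSeriesHasSum_sum_divGcdFiber ha.ne' hχ)
  have hσ := (LSeriesHasSum_sigmaC (Nat.div_pos (Nat.le_of_dvd hm hdvd) ha).ne' s).smul (a : ℂ)
  rw [LSeriesHasSum_congr _ _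
    fun hN => one_convolution_sum_divGcdFiber_ramanujanSum ha.ne' hdvd hN] at hζ
  have hprod : riemannZeta s * LSeries χ s = a * sigmaC (1 - s) (m / a) := hζ.unique hσ
  rw [hT.tsum_eq, mul_left_comm, hprod, one_div, inv_mul_cancel_left₀ (Nat.cast_ne_zero.2 ha.ne')]
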